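/- For any x, y ∈ ℂ one has the theta-like identity Σ_{ω∈L} exp(-π|ω+x|²/a(L) - 2πi E_L(ω+x, y)) = Σ_{ω∈L} exp(-π|ω+y|²/a(L) - 2πi E_L(ω, x)). -/

import Mathlib

/-!
In coordinates `z = s ω₁ + t ω₂` the Gaussian weight `|z|² / a(L)` becomes the binary form
`s² / c + c (t + β s)²` of determinant one, with `c = |ω₂|² / a(L)`, and `E_L` becomes the standard
symplectic form `s t' - t s'`. Poisson summation in the second index turns the sum into a double
sum of Gaussians `exp (-π (s² + σ²) / c - 2πi β s σ - …)` with `s ∈ ℤ + x₁`, `σ ∈ ℤ + y₁`, which is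
symmetric under exchanging `x` and `y`. So the sum is, up to an explicit phase, symmetric in
`x` and `y`; the phase is `exp (2πi E_L(y, x))`, the same one that turns `E_L(ω, x)` into
`E_L(ω + y, x)`.
-/

open scoped Real Topology
open Complex MeasureTheory Filter ComplexConjugate

noncomputable section

/-- The lattice point `m·ω₁ + n·ω₂` indexed by `p = (m, n) : ℤ × ℤ`. -/
def lat (ω₁ ω₂ : ℂ) (p : ℤ × ℤ) : ℂ := (p.1 : ℂ) * ω₁ + (p.2 : ℂ) * ω₂

/-- Membership in the lattice `L = ℤω₁ + ℤω₂`. -/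
def inLat (ω₁ ω₂ : ℂ) (x : ℂ) : Prop := ∃ p : ℤ × ℤ, x = lat ω₁ ω₂ p

/-- The covolume `a(L) = Im(conj ω₁ · ω₂)`. -/
def covol (ω₁ ω₂ : ℂ) : ℝ := (conj ω₁ * ω₂).im

/-- The symplectic form `E_L(x,y) = Im(conj x · y)/a(L)`. -/
def Esymp (ω₁ ω₂ : ℂ) (x y : ℂ) : ℝ := (conj x * y).im / covol ω₁ ω₂

theorem tsum_exp_neg_mul_int_add_sq {b : ℝ} (hb : 0 < b) (u v : ℂ) :
    ∑' n : ℤ, cexp (-π * b * (n + u) ^ 2 + 2 * π * I * (n + u) * v)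
      = (√b : ℂ)⁻¹ * ∑' k : ℤ, cexp (-π * (k + v) ^ 2 / b - 2 * π * I * k * u) := by
  have hb' : (b : ℂ) ≠ 0 := by exact_mod_cast hb.ne'
  have hsqrt : (b : ℂ) ^ (1 / 2 : ℂ) = (√b : ℂ) := by
    rw [Real.sqrt_eq_rpow, Complex.ofReal_cpow hb.le]; norm_num
  calc ∑' n : ℤ, cexp (-π * b * (n + u) ^ 2 + 2 * π * I * (n + u) * v)
      = cexp (-π * b * u ^ 2 + 2 * π * I * u * v) *
          ∑' n : ℤ, cexp (-π * b * n ^ 2 + 2 * π * (-b * u + I * v) * n) := by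
        rw [← tsum_mul_left]
        refine tsum_congr fun n => ?_
        rw [← Complex.exp_add]; ring_nf
    _ = cexp (-π * b * u ^ 2 + 2 * π * I * u * v) * ((√b : ℂ)⁻¹ *
          ∑' k : ℤ, cexp (-π / b * (k + I * (-b * u + I * v)) ^ 2)) := by
        rw [Complex.tsum_exp_neg_quadratic (by simpa using hb), hsqrt, one_div]
    _ = (√b : ℂ)⁻¹ * ∑' k : ℤ, cexp (-π * (-k + v) ^ 2 / b + 2 * π * I * k * u) := by
        rw [mul_left_comm, ← tsum_mul_left]
        congr 1
        refine tsum_congr fun k => ?_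
        rw [← Complex.exp_add]
        congr 1
        field_simp
        ring_nf
        simp only [I_sq, I_pow_four, pow_three, I_mul_I]
        ring
    _ = (√b : ℂ)⁻¹ * ∑' k : ℤ, cexp (-π * (k + v) ^ 2 / b - 2 * π * I * k * u) := by
        rw [← (Equiv.neg ℤ).tsum_eq]
        simp only [Equiv.neg_apply, Int.cast_neg, neg_neg]
        congr 1; refine tsum_congr fun k => ?_
        ring_nf

lemma summable_rexp_neg_mul_int_add_sq {t : ℝ} (ht : 0 < t) (a : ℝ) :
    Summable fun n : ℤ => rexp (-π * (n + a) ^ 2 * t) :=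
  (HurwitzKernelBounds.summable_f_int 0 a ht).congr fun n => by simp [HurwitzKernelBounds.f_int]

lemma summable_of_norm_le_gaussian_mul_gaussian {f : ℤ × ℤ → ℂ} {s t : ℝ} (hs : 0 < s)
    (ht : 0 < t) (a b : ℝ)
    (hf : ∀ p : ℤ × ℤ, ‖f p‖ ≤ rexp (-π * (p.1 + a) ^ 2 * s) * rexp (-π * (p.2 + b) ^ 2 * t)) :
    Summable f :=
  .of_norm_bounded ((summable_rexp_neg_mul_int_add_sq hs a).mul_of_nonneg
    (summable_rexp_neg_mul_int_add_sq ht b) (fun _ => (Real.exp_pos _).le)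
    (fun _ => (Real.exp_pos _).le)) hf

lemma norm_cexp_of_eq_ofReal_add_mul_I {z : ℂ} {r s : ℝ} (h : z = r + s * I) :
    ‖cexp z‖ = rexp r := by
  simp [h, Complex.norm_exp]

def twistedGaussian (c β : ℝ) (x y : ℝ × ℝ) (p : ℤ × ℤ) : ℂ :=
  cexp (-π * ((p.1 + x.1) ^ 2 / c + c * (p.2 + x.2 + β * (p.1 + x.1)) ^ 2)
    - 2 * π * I * ((p.1 + x.1) * y.2 - (p.2 + x.2) * y.1))

/-- What `twistedGaussian c β x y` becomes after Poisson summation in its second index. -/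
def mixedGaussian (c β : ℝ) (x y : ℝ × ℝ) (p : ℤ × ℤ) : ℂ :=
  cexp (-π * ((p.1 + x.1) ^ 2 + (p.2 + y.1) ^ 2) / c
    - 2 * π * I * (β * (p.1 + x.1) * (p.2 + y.1) + (p.1 + x.1) * y.2 + (p.2 + y.1) * x.2))

lemma mixedGaussian_swap (c β : ℝ) (x y : ℝ × ℝ) (p : ℤ × ℤ) :
    mixedGaussian c β y x p.swap = mixedGaussian c β x y p := by
  simp only [mixedGaussian, Prod.fst_swap, Prod.snd_swap]
  congr 1
  ring

lemma summable_mixedGaussian {c : ℝ} (hc : 0 < c) (β : ℝ) (x y : ℝ × ℝ) :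
    Summable (mixedGaussian c β x y) := by
  refine summable_of_norm_le_gaussian_mul_gaussian (inv_pos.2 hc) (inv_pos.2 hc) x.1 y.1
    fun p => ?_
  rw [mixedGaussian, norm_cexp_of_eq_ofReal_add_mul_I
    (r := -π * (p.1 + x.1) ^ 2 * c⁻¹ + -π * (p.2 + y.1) ^ 2 * c⁻¹)
    (s := -2 * π * (β * (p.1 + x.1) * (p.2 + y.1) + (p.1 + x.1) * y.2 + (p.2 + y.1) * x.2))
    (by push_cast; ring), Real.exp_add]

lemma add_div_two_le_sq_div_add_mul_sq {c : ℝ} (hc : 0 < c) (β s t : ℝ) :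
    s ^ 2 / (2 * c) + t ^ 2 / (2 * (c * β ^ 2 + c⁻¹)) ≤ s ^ 2 / c + c * (t + β * s) ^ 2 := by
  have hA : 0 < c * β ^ 2 + c⁻¹ := by positivity
  have hs : s ^ 2 / c ≤ s ^ 2 / c + c * (t + β * s) ^ 2 := le_add_of_nonneg_right (by positivity)
  have ht : t ^ 2 / (c * β ^ 2 + c⁻¹) ≤ s ^ 2 / c + c * (t + β * s) ^ 2 := by
    have hdual : (c * β ^ 2 + c⁻¹) * (s ^ 2 / c + c * (t + β * s) ^ 2) - t ^ 2
        = ((c * β ^ 2 + c⁻¹) * s + β * c * t) ^ 2 := by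
      field_simp; ring
    rw [div_le_iff₀ hA]
    nlinarith [sq_nonneg ((c * β ^ 2 + c⁻¹) * s + β * c * t)]
  calc s ^ 2 / (2 * c) + t ^ 2 / (2 * (c * β ^ 2 + c⁻¹))
      = (s ^ 2 / c + t ^ 2 / (c * β ^ 2 + c⁻¹)) / 2 := by field_simp
    _ ≤ _ := by linarith

lemma summable_twistedGaussian {c : ℝ} (hc : 0 < c) (β : ℝ) (x y : ℝ × ℝ) :
    Summable (twistedGaussian c β x y) := by
  refine summable_of_norm_le_gaussian_mul_gaussian (inv_pos.2 (mul_pos two_pos hc))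
    (inv_pos.2 (mul_pos two_pos (by positivity : 0 < c * β ^ 2 + c⁻¹))) x.1 x.2 fun p => ?_
  rw [twistedGaussian, norm_cexp_of_eq_ofReal_add_mul_I
    (r := -π * ((p.1 + x.1) ^ 2 / c + c * (p.2 + x.2 + β * (p.1 + x.1)) ^ 2))
    (s := -2 * π * ((p.1 + x.1) * y.2 - (p.2 + x.2) * y.1)) (by push_cast; ring),
    ← Real.exp_add, Real.exp_le_exp]
  rw [mul_assoc, mul_assoc, ← mul_add, ← div_eq_mul_inv, ← div_eq_mul_inv]
  exact mul_le_mul_of_nonpos_left (add_div_two_le_sq_div_add_mul_sq hc β _ _)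
    (neg_nonpos.2 Real.pi_pos.le)

lemma tsum_twistedGaussian_fiber {c : ℝ} (hc : 0 < c) (β : ℝ) (x y : ℝ × ℝ) (m : ℤ) :
    ∑' n : ℤ, twistedGaussian c β x y (m, n)
      = (√c : ℂ)⁻¹ * cexp (2 * π * I * x.2 * y.1) * ∑' k : ℤ, mixedGaussian c β x y (m, k) := by
  have hc' : (c : ℂ) ≠ 0 := by exact_mod_cast hc.ne'
  set s : ℂ := m + x.1
  set u : ℂ := x.2 + β * s
  have split : ∀ n : ℤ, twistedGaussian c β x y (m, n)
      = cexp (-π * s ^ 2 / c - 2 * π * I * s * (y.2 + β * y.1))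
        * cexp (-π * c * (n + u) ^ 2 + 2 * π * I * (n + u) * y.1) := fun n => by
    rw [twistedGaussian, ← Complex.exp_add]
    congr 1
    field_simp
    ring
  have merge : ∀ k : ℤ, cexp (-π * s ^ 2 / c - 2 * π * I * s * (y.2 + β * y.1))
      * cexp (-π * (k + y.1) ^ 2 / c - 2 * π * I * k * u)
      = cexp (2 * π * I * x.2 * y.1) * mixedGaussian c β x y (m, k) := fun k => by
    rw [mixedGaussian, ← Complex.exp_add, ← Complex.exp_add]
    congr 1
    field_simp
    ring
  rw [tsum_congr split, tsum_mul_left, tsum_exp_neg_mul_int_add_sq hc, mul_left_comm,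
    ← tsum_mul_left, tsum_congr merge, tsum_mul_left, ← mul_assoc]

lemma tsum_twistedGaussian {c : ℝ} (hc : 0 < c) (β : ℝ) (x y : ℝ × ℝ) :
    ∑' p, twistedGaussian c β x y p
      = (√c : ℂ)⁻¹ * cexp (2 * π * I * x.2 * y.1) * ∑' p, mixedGaussian c β x y p := by
  rw [(summable_twistedGaussian hc β x y).tsum_prod, (summable_mixedGaussian hc β x y).tsum_prod,
    ← tsum_mul_left]
  exact tsum_congr (tsum_twistedGaussian_fiber hc β x y)

theorem tsum_twistedGaussian_swap {c : ℝ} (hc : 0 < c) (β : ℝ) (x y : ℝ × ℝ) :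
    ∑' p, twistedGaussian c β x y p
      = cexp (2 * π * I * (x.2 * y.1 - x.1 * y.2)) * ∑' p, twistedGaussian c β y x p := by
  have hM : ∑' p, mixedGaussian c β y x p = ∑' p, mixedGaussian c β x y p := by
    rw [← (Equiv.prodComm ℤ ℤ).tsum_eq]
    exact tsum_congr (mixedGaussian_swap c β x y)
  rw [tsum_twistedGaussian hc, tsum_twistedGaussian hc, hM, ← mul_assoc,
    mul_left_comm _ (√c : ℂ)⁻¹, ← Complex.exp_add]
  ring_nf

def latticeTheta (ω₁ ω₂ x y : ℂ) : ℂ :=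
  ∑' p : ℤ × ℤ,
    cexp ((-(π * normSq (lat ω₁ ω₂ p + x) / covol ω₁ ω₂ : ℝ) : ℂ)
      - 2 * π * I * (Esymp ω₁ ω₂ (lat ω₁ ω₂ p + x) y : ℝ))

section Lattice

variable {ω₁ ω₂ : ℂ}

lemma right_ne_zero_of_covol_ne_zero (h : covol ω₁ ω₂ ≠ 0) : ω₂ ≠ 0 := by
  rintro rfl
  simp [covol] at h

lemma exists_eq_ofReal_mul_add_ofReal_mul (h : covol ω₁ ω₂ ≠ 0) (z : ℂ) :
    ∃ s t : ℝ, z = s * ω₁ + t * ω₂ := by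
  have h' : (covol ω₁ ω₂ : ℂ) ≠ 0 := by exact_mod_cast h
  have cramer : (covol ω₁ ω₂ : ℂ) * z = -(conj ω₂ * z).im * ω₁ + (conj ω₁ * z).im * ω₂ := by
    apply Complex.ext <;> simp [covol, mul_re, mul_im] <;> ring
  refine ⟨-(conj ω₂ * z).im / covol ω₁ ω₂, (conj ω₁ * z).im / covol ω₁ ω₂, ?_⟩
  apply mul_left_cancel₀ h'
  rw [cramer]
  push_cast
  field_simp

lemma normSq_ofReal_mul_add_div_covol (h : 0 < covol ω₁ ω₂) (s t : ℝ) :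
    normSq (s * ω₁ + t * ω₂) / covol ω₁ ω₂
      = s ^ 2 / (normSq ω₂ / covol ω₁ ω₂)
        + normSq ω₂ / covol ω₁ ω₂ * (t + (conj ω₂ * ω₁).re / normSq ω₂ * s) ^ 2 := by
  have hω₂ : normSq ω₂ ≠ 0 := normSq_eq_zero.not.2 (right_ne_zero_of_covol_ne_zero h.ne')
  have lagrange : normSq ω₁ * normSq ω₂ = (conj ω₂ * ω₁).re ^ 2 + covol ω₁ ω₂ ^ 2 := by
    simp only [normSq_apply, covol, mul_re, mul_im, conj_re, conj_im]; ring
  have expand : normSq (s * ω₁ + t * ω₂)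
      = s ^ 2 * normSq ω₁ + 2 * s * t * (conj ω₂ * ω₁).re + t ^ 2 * normSq ω₂ := by
    simp [normSq_apply, mul_re, mul_im]; ring
  rw [expand]
  field_simp
  linear_combination s ^ 2 * lagrange

lemma Esymp_ofReal_mul_add (h : covol ω₁ ω₂ ≠ 0) (s t s' t' : ℝ) :
    Esymp ω₁ ω₂ (s * ω₁ + t * ω₂) (s' * ω₁ + t' * ω₂) = s * t' - t * s' := by
  rw [Esymp, div_eq_iff h, covol]
  simp only [mul_re, mul_im, add_re, add_im, conj_re, conj_im, ofReal_re, ofReal_im]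
  ring

lemma Esymp_add_left (x x' y : ℂ) :
    Esymp ω₁ ω₂ (x + x') y = Esymp ω₁ ω₂ x y + Esymp ω₁ ω₂ x' y := by
  simp only [Esymp, map_add, add_mul, add_im, add_div]

lemma latticeTheta_ofReal_mul_add (h : 0 < covol ω₁ ω₂) (x y : ℝ × ℝ) :
    latticeTheta ω₁ ω₂ (x.1 * ω₁ + x.2 * ω₂) (y.1 * ω₁ + y.2 * ω₂)
      = ∑' p, twistedGaussian (normSq ω₂ / covol ω₁ ω₂) ((conj ω₂ * ω₁).re / normSq ω₂) x y p := by
  refine tsum_congr fun p => ?_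
  have hlat : lat ω₁ ω₂ p + (x.1 * ω₁ + x.2 * ω₂)
      = ((p.1 + x.1 : ℝ) : ℂ) * ω₁ + ((p.2 + x.2 : ℝ) : ℂ) * ω₂ := by
    rw [lat]; push_cast; ring
  rw [hlat, mul_div_assoc, normSq_ofReal_mul_add_div_covol h,
    Esymp_ofReal_mul_add h.ne', twistedGaussian]
  push_cast
  ring_nf

theorem latticeTheta_swap (h : 0 < covol ω₁ ω₂) (x y : ℂ) :
    latticeTheta ω₁ ω₂ x y = cexp (2 * π * I * Esymp ω₁ ω₂ y x) * latticeTheta ω₁ ω₂ y x := by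
  obtain ⟨x₁, x₂, rfl⟩ := exists_eq_ofReal_mul_add_ofReal_mul h.ne' x
  obtain ⟨y₁, y₂, rfl⟩ := exists_eq_ofReal_mul_add_ofReal_mul h.ne' y
  have hc : 0 < normSq ω₂ / covol ω₁ ω₂ :=
    div_pos (normSq_pos.2 (right_ne_zero_of_covol_ne_zero h.ne')) h
  rw [latticeTheta_ofReal_mul_add h (x₁, x₂) (y₁, y₂),
    latticeTheta_ofReal_mul_add h (y₁, y₂) (x₁, x₂), tsum_twistedGaussian_swap hc,
    Esymp_ofReal_mul_add h.ne']
  push_cast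
  ring_nf

end Lattice

theorem stmt2 (ω₁ ω₂ : ℂ) (h : 0 < covol ω₁ ω₂) (x y : ℂ) :
    ∑' p : ℤ × ℤ,
        Complex.exp ((-(Real.pi * Complex.normSq (lat ω₁ ω₂ p + x) / covol ω₁ ω₂ : ℝ) : ℂ)
          - 2 * (Real.pi : ℂ) * I * (Esymp ω₁ ω₂ (lat ω₁ ω₂ p + x) y : ℝ))
      = ∑' p : ℤ × ℤ,
          Complex.exp ((-(Real.pi * Complex.normSq (lat ω₁ ω₂ p + y) / covol ω₁ ω₂ : ℝ) : ℂ)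
            - 2 * (Real.pi : ℂ) * I * (Esymp ω₁ ω₂ (lat ω₁ ω₂ p) x : ℝ)) := by
  calc _ = latticeTheta ω₁ ω₂ x y := rfl
    _ = cexp (2 * π * I * Esymp ω₁ ω₂ y x) * latticeTheta ω₁ ω₂ y x := latticeTheta_swap h x y
    _ = _ := by
      rw [latticeTheta, ← tsum_mul_left]
      refine tsum_congr fun p => ?_
      rw [← Complex.exp_add, add_comm (lat ω₁ ω₂ p) y, Esymp_add_left, add_comm y]
      push_cast
      ring_nf
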